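/- Let Σ be a finite alphabet with |Σ| = σ ≥ 2 and let w be a word over Σ with alph(w) = Σ and |w| > ι(w)·σ. Then there exists a word w' over Σ with ι(w') = ι(w) and |w'| = ι(w)·σ such that for all k ∈ [|w|], |ScatFact_k(w')| ≤ |ScatFact_k(w)|. -/

import Mathlib

/-!
Any word that is `ι`-universal over `S` has an `ι`-universal scattered factor of length
`ι · |S|`: in each arch keep one occurrence of every letter. The first arch ends at the letter
`c` whose first occurrence is the latest one; `c` occurs only once in that arch, so every word
`c v` with `|v| = ι - 1` embeds with `v` in the remainder, which is therefore `(ι - 1)`-universal.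
A scattered factor `w'` of `w` satisfies `ι(w') ≤ ι(w)` and `ScatFact k w' ⊆ ScatFact k w`.
-/

open List

universe u
variable {α : Type u}

/-- `ScatFact k w` is the set of scattered factors (subsequences) of `w` of length exactly `k`. -/
def ScatFact (k : ℕ) (w : List α) : Set (List α) :=
  {v | v.length = k ∧ v.Sublist w}

/-- `w` is `k`-universal over the alphabet `S`: every word of length `k` over `S`
is a scattered factor of `w`. -/
def IsKUniversal [DecidableEq α] (S : Finset α) (k : ℕ) (w : List α) : Prop :=
  ∀ v : List α, v.length = k → (∀ x ∈ v, x ∈ S) → v.Sublist w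

/-- The universality index of `w` over the alphabet `S`: the largest `k` such that
`w` is `k`-universal over `S`. -/
noncomputable def univIdx [DecidableEq α] (S : Finset α) (w : List α) : ℕ :=
  sSup {k | IsKUniversal S k w}

/-- `IsArchFact S w inners modus rest` says that `w` has the arch factorization
`w = ar_1 ⋯ ar_n · rest` over the alphabet `S`, where the `i`-th arch is
`ar_i = inners[i] ++ [modus[i]]`: each arch contains every letter of `S`,
the last letter of each arch occurs only once within the arch, and the
alphabet of the rest is a proper subset of `S`. -/
def IsArchFact [DecidableEq α] (S : Finset α) (w : List α)
    (inners : List (List α)) (modus : List α) (rest : List α) : Prop :=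
  inners.length = modus.length ∧
  w = (List.zipWith (fun inn m => inn ++ [m]) inners modus).flatten ++ rest ∧
  (∀ p ∈ List.zip inners modus, ∀ x ∈ S, x ∈ p.1 ++ [p.2]) ∧
  (∀ p ∈ List.zip inners modus, p.2 ∉ p.1) ∧
  rest.toFinset ⊂ S

/-- `v` is perfect `k`-universal over `S`: `alph(v) = S`, the universality index of `v`
over `S` is `k`, and the rest of its arch factorization over `S` is empty. -/
def IsPerfectUniv [DecidableEq α] (S : Finset α) (k : ℕ) (v : List α) : Prop :=
  v.toFinset = S ∧ univIdx S v = k ∧ ∃ inners modus, IsArchFact S v inners modus []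

/-- `v` is minimal perfect `k`-universal over `S`. -/
def IsMinPerfectUniv [DecidableEq α] (S : Finset α) (k : ℕ) (v : List α) : Prop :=
  IsPerfectUniv S k v ∧ ∀ v' : List α, IsPerfectUniv S k v' → v.length ≤ v'.length

/-- `nextAlphPos w i s` (positions `1`-indexed): the least position `j` such that
`w[i+1..j]` contains exactly `s` distinct letters, or `none` (representing `-1`)
if `w[i+1..|w|]` contains fewer than `s` distinct letters. -/
noncomputable def nextAlphPos [DecidableEq α] (w : List α) (i s : ℕ) : Option ℕ :=
  if (w.drop i).toFinset.card < s then none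
  else some (sInf {j | ((w.drop i).take (j - i)).toFinset.card = s})

/-- The letter of `w` at (1-indexed) position `j`. -/
def letterAt [Inhabited α] (w : List α) (j : ℕ) : α := w.getD (j - 1) default

/-- The word over `Fin σ` with `ι` arches, whose first arch is `a_1 a_2 ⋯ a_σ`
and each later arch is the reverse of the previous one. -/
def wmin (σ ι : ℕ) : List (Fin σ) :=
  ((List.range ι).map (fun i =>
    if i % 2 = 0 then List.finRange σ else (List.finRange σ).reverse)).flatten

lemma List.cons_sublist_of_cons_sublist_append {c : α} {v l₁ l₂ : List α}
    (h : c :: v <+ l₁ ++ l₂) (hc : c ∉ l₁) : c :: v <+ l₂ := by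
  obtain ⟨_ | ⟨x, l₁'⟩, l₂', hv, h₁, h₂⟩ := List.sublist_append_iff.mp h
  · simpa [hv] using h₂
  · simp only [cons_append, cons.injEq] at hv
    exact absurd (h₁.subset (by simp [hv.1])) hc

lemma scatFact_subset_of_sublist {k : ℕ} {u w : List α} (h : u <+ w) :
    ScatFact k u ⊆ ScatFact k w :=
  fun _ ⟨hlen, hv⟩ => ⟨hlen, hv.trans h⟩

lemma scatFact_finite (k : ℕ) (w : List α) : (ScatFact k w).Finite :=
  (List.finite_toSet w.sublists).subset fun _ hv => List.mem_sublists.mpr hv.2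

section Universality

variable [DecidableEq α] {S : Finset α} {k : ℕ} {u w : List α}

lemma isKUniversal_zero (S : Finset α) (w : List α) : IsKUniversal S 0 w := by
  intro v hv _
  simp [List.length_eq_zero_iff.mp hv]

lemma IsKUniversal.of_sublist (hu : IsKUniversal S k u) (huw : u <+ w) :
    IsKUniversal S k w :=
  fun v hv hvS => (hu v hv hvS).trans huw

lemma IsKUniversal.replicate_sublist (hw : IsKUniversal S k w) {a : α} (ha : a ∈ S) :
    List.replicate k a <+ w :=
  hw _ List.length_replicate fun _ hx => (List.eq_of_mem_replicate hx) ▸ ha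

lemma IsKUniversal.le_length (hw : IsKUniversal S k w) (hS : S.Nonempty) :
    k ≤ w.length := by
  obtain ⟨a, ha⟩ := hS
  simpa using (hw.replicate_sublist ha).length_le

lemma IsKUniversal.mem (hw : IsKUniversal S (k + 1) w) {a : α} (ha : a ∈ S) : a ∈ w :=
  (hw.replicate_sublist ha).subset (by simp)

lemma bddAbove_setOf_isKUniversal (hS : S.Nonempty) (w : List α) :
    BddAbove {k | IsKUniversal S k w} :=
  ⟨w.length, fun _ hk => IsKUniversal.le_length hk hS⟩

lemma isKUniversal_univIdx (hS : S.Nonempty) (w : List α) :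
    IsKUniversal S (univIdx S w) w :=
  Nat.sSup_mem ⟨0, isKUniversal_zero S w⟩ (bddAbove_setOf_isKUniversal hS w)

lemma le_univIdx (hS : S.Nonempty) (hw : IsKUniversal S k w) : k ≤ univIdx S w :=
  le_csSup (bddAbove_setOf_isKUniversal hS w) hw

lemma univIdx_eq_of_sublist (hS : S.Nonempty) (huw : u <+ w)
    (hu : IsKUniversal S (univIdx S w) u) : univIdx S u = univIdx S w :=
  le_antisymm (le_univIdx hS ((isKUniversal_univIdx hS u).of_sublist huw)) (le_univIdx hS hu)

lemma isKUniversal_succ_append {l₁ l₂ : List α} (h₁ : ∀ a ∈ S, a ∈ l₁)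
    (h₂ : IsKUniversal S k l₂) : IsKUniversal S (k + 1) (l₁ ++ l₂) := by
  rintro (_ | ⟨x, v⟩) hv hvS
  · simp at hv
  · have hx : [x] <+ l₁ := List.singleton_sublist.mpr (h₁ x (hvS x (by simp)))
    exact hx.append (h₂ v (by simpa using hv) fun y hy => hvS y (by simp [hy]))

lemma IsKUniversal.of_succ_append_cons {p s : List α} {c : α}
    (hw : IsKUniversal S (k + 1) (p ++ c :: s)) (hc : c ∈ S) (hcp : c ∉ p) :
    IsKUniversal S k s := by
  intro v hv hvS
  have hcv : c :: v <+ p ++ c :: s :=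
    hw (c :: v) (by simp [hv]) (List.forall_mem_cons.mpr ⟨hc, hvS⟩)
  exact List.cons_sublist_cons.mp (List.cons_sublist_of_cons_sublist_append hcv hcp)

lemma exists_eq_append_cons_of_forall_mem (hS : S.Nonempty) (hw : ∀ a ∈ S, a ∈ w) :
    ∃ p c s, w = p ++ c :: s ∧ c ∈ S ∧ c ∉ p ∧ ∀ a ∈ S, a ∈ p ++ [c] := by
  obtain ⟨c, hcS, hmax⟩ := S.exists_max_image w.idxOf hS
  have hcw : w.idxOf c < w.length := List.idxOf_lt_length_of_mem (hw c hcS)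
  refine ⟨w.take (w.idxOf c), c, w.drop (w.idxOf c + 1), ?_, hcS, ?_, fun a ha => ?_⟩
  · conv_lhs => rw [← List.take_append_drop (w.idxOf c) w, List.drop_eq_getElem_cons hcw]
    simp
  · rw [List.mem_take_iff_idxOf_lt (hw c hcS)]
    exact lt_irrefl _
  · rcases eq_or_ne a c with rfl | hac
    · simp
    · refine List.mem_append_left _ ((List.mem_take_iff_idxOf_lt (hw a ha)).mpr ?_)
      refine lt_of_le_of_ne (hmax a ha) fun h => hac ?_
      exact List.idxOf_inj (hw a ha) |>.mp h

lemma exists_sublist_length_eq_card (hw : ∀ a ∈ S, a ∈ w) :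
    ∃ u, u <+ w ∧ u.length = S.card ∧ ∀ a ∈ S, a ∈ u := by
  set u := (w.filter (· ∈ S)).dedup
  have hmem : ∀ a, a ∈ u ↔ a ∈ S := fun a => by
    simp only [u, List.mem_dedup, List.mem_filter, decide_eq_true_eq]
    exact ⟨And.right, fun ha => ⟨hw a ha, ha⟩⟩
  have htoFinset : u.toFinset = S := Finset.ext fun a => by simp [hmem]
  refine ⟨u, (List.dedup_sublist _).trans List.filter_sublist, ?_, fun a => (hmem a).mpr⟩
  rw [← htoFinset, List.toFinset_card_of_nodup (List.nodup_dedup _)]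

lemma IsKUniversal.exists_sublist_length_eq (hS : S.Nonempty) (hw : IsKUniversal S k w) :
    ∃ u, u <+ w ∧ u.length = k * S.card ∧ IsKUniversal S k u := by
  induction k generalizing w with
  | zero => exact ⟨[], List.nil_sublist w, by simp, isKUniversal_zero S []⟩
  | succ k ih =>
    obtain ⟨p, c, s, rfl, hcS, hcp, hpc⟩ :=
      exists_eq_append_cons_of_forall_mem hS fun a ha => hw.mem ha
    obtain ⟨arch, harch, harchLen, harchS⟩ := exists_sublist_length_eq_card hpc
    obtain ⟨u, hus, huLen, hu⟩ := ih (hw.of_succ_append_cons hcS hcp)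
    refine ⟨arch ++ u, ?_, ?_, isKUniversal_succ_append harchS hu⟩
    · simpa using harch.append hus
    · rw [List.length_append, harchLen, huLen, Nat.succ_mul, add_comm]

end Universality

theorem stmt14_general {α : Type u} [Fintype α] [DecidableEq α]
    (hsigma : 2 ≤ Fintype.card α) (w : List α) :
    ∃ w' : List α, univIdx Finset.univ w' = univIdx Finset.univ w ∧
      w'.length = univIdx Finset.univ w * Fintype.card α ∧
      ∀ k : ℕ, 1 ≤ k → k ≤ w.length →
        (ScatFact k w').ncard ≤ (ScatFact k w).ncard := by
  have hS : (Finset.univ : Finset α).Nonempty :=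
    Finset.univ_nonempty_iff.mpr (Fintype.card_pos_iff.mp (by omega))
  obtain ⟨w', hw'w, hlen, hw'⟩ := (isKUniversal_univIdx hS w).exists_sublist_length_eq hS
  refine ⟨w', univIdx_eq_of_sublist hS hw'w hw', hlen, fun k _ _ => ?_⟩
  exact Set.ncard_le_ncard (scatFact_subset_of_sublist hw'w) (scatFact_finite k w)

theorem stmt14 {α : Type u} [Fintype α] [DecidableEq α]
    (hsigma : 2 ≤ Fintype.card α) (w : List α) (halph : ∀ a : α, a ∈ w)
    (hlen : univIdx Finset.univ w * Fintype.card α < w.length) :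
    ∃ w' : List α, univIdx Finset.univ w' = univIdx Finset.univ w ∧
      w'.length = univIdx Finset.univ w * Fintype.card α ∧
      ∀ k : ℕ, 1 ≤ k → k ≤ w.length →
        (ScatFact k w').ncard ≤ (ScatFact k w).ncard :=
  stmt14_general hsigma w
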